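/- For all matrices X, W ∈ ℝ^{n×p}, the identity ⟨X·(XᵀX − I_p), W·A(X) − X·Φ(Xᵀ·W)⟩ = −(3/2)·⟨(XᵀX − I_p)², Φ(Xᵀ·W)⟩ holds. Consequently, if f is differentiable then ⟨X·(XᵀX − I_p), ∇g(X)⟩ = −(3/2)·⟨(XᵀX − I_p)², Φ(Xᵀ·G(X))⟩ for every X ∈ ℝ^{n×p}. -/

import Mathlib

open Matrix

attribute [local instance] Matrix.frobeniusNormedAddCommGroup Matrix.frobeniusNormedSpace

namespace ExPen

noncomputable def finner {n p : ℕ} (A B : Matrix (Fin n) (Fin p) ℝ) : ℝ := (Aᵀ * B).trace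

noncomputable def Phi {p : ℕ} (M : Matrix (Fin p) (Fin p) ℝ) : Matrix (Fin p) (Fin p) ℝ :=
  (1 / 2 : ℝ) • (M + Mᵀ)

noncomputable def Amap {n p : ℕ} (X : Matrix (Fin n) (Fin p) ℝ) : Matrix (Fin p) (Fin p) ℝ :=
  (3 / 2 : ℝ) • (1 : Matrix (Fin p) (Fin p) ℝ) - (1 / 2 : ℝ) • (Xᵀ * X)

noncomputable def g {n p : ℕ} (f : Matrix (Fin n) (Fin p) ℝ → ℝ)
    (X : Matrix (Fin n) (Fin p) ℝ) : ℝ := f (X * Amap X)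

noncomputable def hpen {n p : ℕ} (f : Matrix (Fin n) (Fin p) ℝ → ℝ) (β : ℝ)
    (X : Matrix (Fin n) (Fin p) ℝ) : ℝ := g f X + β / 4 * ‖Xᵀ * X - 1‖ ^ 2

noncomputable def dualCLM {n p : ℕ} (G : Matrix (Fin n) (Fin p) ℝ) :
    Matrix (Fin n) (Fin p) ℝ →L[ℝ] ℝ :=
  LinearMap.toContinuousLinearMap
    { toFun := fun D => (Gᵀ * D).trace
      map_add' := by intro D E; simp [Matrix.mul_add]
      map_smul' := by intro c D; simp [Matrix.mul_smul] }

def HasGradAt {n p : ℕ} (φ : Matrix (Fin n) (Fin p) ℝ → ℝ)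
    (X G : Matrix (Fin n) (Fin p) ℝ) : Prop :=
  HasFDerivAt φ (dualCLM G) X

noncomputable def specNorm {n p : ℕ} (X : Matrix (Fin n) (Fin p) ℝ) : ℝ :=
  ‖LinearMap.toContinuousLinearMap
    (Matrix.toEuclideanLin X : EuclideanSpace ℝ (Fin p) →ₗ[ℝ] EuclideanSpace ℝ (Fin n))‖

lemma posSemidef_tmul {n p : ℕ} (X : Matrix (Fin n) (Fin p) ℝ) : (Xᵀ * X).PosSemidef := by
  simpa [Matrix.conjTranspose_eq_transpose_of_trivial] using
    Matrix.posSemidef_conjTranspose_mul_self X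

/-- The positive semidefinite square root, as defined in the older Mathlib (since removed). -/
noncomputable def _root_.Matrix.PosSemidef.sqrt {m : Type*} [Fintype m] [DecidableEq m]
    {A : Matrix m m ℝ} (hA : A.PosSemidef) : Matrix m m ℝ :=
  (hA.1.eigenvectorUnitary : Matrix m m ℝ) * diagonal ((↑) ∘ (√·) ∘ hA.1.eigenvalues) *
    (star (hA.1.eigenvectorUnitary : Matrix m m ℝ))

noncomputable def Pst {n p : ℕ} (X : Matrix (Fin n) (Fin p) ℝ) : Matrix (Fin n) (Fin p) ℝ :=
  X * ((posSemidef_tmul X).sqrt)⁻¹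

/-!
Write `S = XᵀX - I`, which is symmetric, so that `A(X) = I - S/2` and `XᵀX = S + I`. Against a
symmetric matrix the symmetrization `Φ` is invisible under the trace, and the left-hand side
collapses to `tr(S M) - ½ tr(S² M) - tr(S² M) - tr(S M)` with `M = XᵀW`.

For the gradient, the chain rule gives `Dg(X)[D] = ⟨G, D A(X) - X Φ(XᵀD)⟩`. The linear map
`D ↦ D A(X) - X Φ(XᵀD)` is self-adjoint for the Frobenius product, so
`∇g(X) = G A(X) - X Φ(XᵀG)` and the second identity is the first one with `W = G`.
-/

section Frobenius

variable {n p : ℕ}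

lemma finner_comm (A B : Matrix (Fin n) (Fin p) ℝ) : finner A B = finner B A := by
  rw [finner, ← trace_transpose, transpose_mul, transpose_transpose, finner]

lemma finner_sub_right (A B C : Matrix (Fin n) (Fin p) ℝ) :
    finner A (B - C) = finner A B - finner A C := by
  simp only [finner, Matrix.mul_sub, trace_sub]

lemma finner_mul_left {q : ℕ} (X : Matrix (Fin n) (Fin q) ℝ) (A : Matrix (Fin q) (Fin p) ℝ)
    (B : Matrix (Fin n) (Fin p) ℝ) : finner (X * A) B = finner A (Xᵀ * B) := by
  simp only [finner, transpose_mul, Matrix.mul_assoc]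

lemma finner_mul_right {q : ℕ} (A : Matrix (Fin n) (Fin q) ℝ) (C : Matrix (Fin q) (Fin p) ℝ)
    (B : Matrix (Fin n) (Fin p) ℝ) : finner (A * C) B = finner A (B * Cᵀ) := by
  rw [finner, finner, transpose_mul, Matrix.mul_assoc, trace_mul_comm, Matrix.mul_assoc]

lemma finner_phi_right (M N : Matrix (Fin p) (Fin p) ℝ) :
    finner M (Phi N) = finner (Phi M) N := by
  have h : finner M Nᵀ = finner Mᵀ N := by
    rw [finner, finner, transpose_transpose, ← transpose_mul, trace_transpose, trace_mul_comm]
  simp only [Phi, finner, transpose_smul, transpose_add, Matrix.mul_smul, Matrix.smul_mul,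
    Matrix.mul_add, Matrix.add_mul, trace_smul, trace_add] at h ⊢
  rw [h]

lemma transpose_amap (X : Matrix (Fin n) (Fin p) ℝ) : (Amap X)ᵀ = Amap X := by
  simp [Amap, transpose_mul]

noncomputable def derivMulAmap (X W : Matrix (Fin n) (Fin p) ℝ) : Matrix (Fin n) (Fin p) ℝ :=
  W * Amap X - X * Phi (Xᵀ * W)

lemma finner_derivMulAmap_right (X V W : Matrix (Fin n) (Fin p) ℝ) :
    finner V (derivMulAmap X W) = finner (derivMulAmap X V) W := by
  have hAmap : finner V (W * Amap X) = finner (V * Amap X) W := by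
    rw [finner_comm, finner_mul_right, transpose_amap, finner_comm]
  have hPhi : finner V (X * Phi (Xᵀ * W)) = finner (X * Phi (Xᵀ * V)) W := by
    rw [finner_comm, finner_mul_left, finner_comm, finner_phi_right, finner_mul_left]
  rw [derivMulAmap, derivMulAmap, finner_sub_right, finner_comm (_ - _), finner_sub_right,
    finner_comm W, finner_comm W, hAmap, hPhi]

lemma trace_mul_phi {S : Matrix (Fin p) (Fin p) ℝ} (hS : Sᵀ = S) (M : Matrix (Fin p) (Fin p) ℝ) :
    (S * Phi M).trace = (S * M).trace := by
  have h : (S * Mᵀ).trace = (S * M).trace := by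
    rw [← trace_transpose, transpose_mul, transpose_transpose, hS, trace_mul_comm]
  rw [Phi, Matrix.mul_smul, Matrix.mul_add, trace_smul, trace_add, h, smul_eq_mul]
  ring

lemma finner_mul_sub_one_derivMulAmap (X W : Matrix (Fin n) (Fin p) ℝ) :
    finner (X * (Xᵀ * X - 1)) (derivMulAmap X W) =
      -(3 / 2) * finner ((Xᵀ * X - 1) ^ 2) (Phi (Xᵀ * W)) := by
  set S := Xᵀ * X - 1
  have hS : Sᵀ = S := by simp [S, transpose_mul]
  have hSS : (S * S)ᵀ = S * S := by rw [transpose_mul, hS]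
  have hA : Amap X = 1 - (1 / 2 : ℝ) • S := by simp only [Amap, S]; module
  have hP : Xᵀ * X = S + 1 := by simp [S]
  calc finner (X * S) (derivMulAmap X W)
      = (S * (Xᵀ * W) * Amap X).trace - (S * (Xᵀ * X) * Phi (Xᵀ * W)).trace := by
        simp only [derivMulAmap, finner, transpose_mul, hS, Matrix.mul_sub, trace_sub,
          Matrix.mul_assoc]
    _ = (S * (Xᵀ * W)).trace - (1 / 2) * (S * S * (Xᵀ * W)).trace
          - (S * S * Phi (Xᵀ * W)).trace - (S * Phi (Xᵀ * W)).trace := by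
        rw [hA, hP, Matrix.mul_sub, Matrix.mul_add, Matrix.add_mul, Matrix.mul_smul,
          trace_sub, trace_add, trace_smul, Matrix.mul_one, Matrix.mul_one, trace_mul_cycle,
          smul_eq_mul]
        ring
    _ = -(3 / 2) * finner (S ^ 2) (Phi (Xᵀ * W)) := by
        rw [finner, pow_two, hSS, trace_mul_phi hS, trace_mul_phi hSS]
        ring

end Frobenius

section BilinearCLM

variable {l m o : Type*} [Fintype l] [Fintype m] [Fintype o]

noncomputable def mulCLM :
    Matrix l m ℝ →L[ℝ] Matrix m o ℝ →L[ℝ] Matrix l o ℝ :=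
  (mulLinearMap ℝ).mkContinuous₂ 1 fun A B => by simpa using frobenius_norm_mul A B

noncomputable def transposeMulCLM :
    Matrix m l ℝ →L[ℝ] Matrix m o ℝ →L[ℝ] Matrix l o ℝ :=
  ((mulLinearMap ℝ).comp (transposeLinearEquiv m l ℝ ℝ).toLinearMap).mkContinuous₂ 1
    fun A B => by simpa [frobenius_norm_transpose] using frobenius_norm_mul Aᵀ B

end BilinearCLM

section Gradient

variable {n p : ℕ}

noncomputable def derivMulAmapCLM (X : Matrix (Fin n) (Fin p) ℝ) :
    Matrix (Fin n) (Fin p) ℝ →L[ℝ] Matrix (Fin n) (Fin p) ℝ :=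
  LinearMap.toContinuousLinearMap
    { toFun := derivMulAmap X
      map_add' := fun V W => by
        simp only [derivMulAmap, Phi, Matrix.mul_add, Matrix.add_mul, transpose_add,
          Matrix.mul_smul]
        module
      map_smul' := fun c V => by
        simp only [derivMulAmap, Phi, Matrix.mul_smul, Matrix.smul_mul, transpose_smul,
          Matrix.mul_add, smul_add, RingHom.id_apply]
        module }

lemma hasFDerivAt_mul_amap (X : Matrix (Fin n) (Fin p) ℝ) :
    HasFDerivAt (fun Y => Y * Amap Y) (derivMulAmapCLM X) X := by
  have hGram := transposeMulCLM.hasFDerivAt_of_bilinear (hasFDerivAt_id X) (hasFDerivAt_id X)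
  have hAmap : HasFDerivAt Amap _ X :=
    (hGram.const_smul (1 / 2 : ℝ)).const_sub ((3 / 2 : ℝ) • (1 : Matrix (Fin p) (Fin p) ℝ))
  refine (mulCLM.hasFDerivAt_of_bilinear (hasFDerivAt_id X) hAmap).congr_fderiv
    (ContinuousLinearMap.ext fun D => ?_)
  -- `simp` does not rewrite under these coercions; the product-rule derivative unfolds by `rfl`.
  change X * -((1 / 2 : ℝ) • (Xᵀ * D + Dᵀ * X)) + D * Amap X = derivMulAmap X D
  rw [derivMulAmap, Phi, transpose_mul, transpose_transpose, Matrix.mul_neg]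
  abel

lemma dualCLM_injective : Function.Injective (dualCLM : Matrix (Fin n) (Fin p) ℝ → _) := by
  intro G G' h
  rw [← transpose_inj, ext_iff_trace_mul_right]
  exact fun D => DFunLike.congr_fun h D

lemma HasGradAt.unique {φ : Matrix (Fin n) (Fin p) ℝ → ℝ} {X G G' : Matrix (Fin n) (Fin p) ℝ}
    (hG : HasGradAt φ X G) (hG' : HasGradAt φ X G') : G = G' :=
  dualCLM_injective (HasFDerivAt.unique hG hG')

lemma hasGradAt_g {f : Matrix (Fin n) (Fin p) ℝ → ℝ} {X G : Matrix (Fin n) (Fin p) ℝ}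
    (hf : HasGradAt f (X * Amap X) G) : HasGradAt (g f) X (derivMulAmap X G) := by
  have hf' : HasFDerivAt f (dualCLM G) (X * Amap X) := hf
  refine (hf'.comp X (hasFDerivAt_mul_amap X)).congr_fderiv
    (ContinuousLinearMap.ext fun D => ?_)
  exact finner_derivMulAmap_right X G D

end Gradient

theorem statement_3 {n p : ℕ} (f : Matrix (Fin n) (Fin p) ℝ → ℝ)
    (gradf : Matrix (Fin n) (Fin p) ℝ → Matrix (Fin n) (Fin p) ℝ)
    (hgradf : ∀ Y, HasGradAt f Y (gradf Y))
    (gradg : Matrix (Fin n) (Fin p) ℝ → Matrix (Fin n) (Fin p) ℝ)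
    (hgradg : ∀ Y, HasGradAt (g f) Y (gradg Y)) :
    (∀ X W : Matrix (Fin n) (Fin p) ℝ,
      finner (X * (Xᵀ * X - 1)) (W * Amap X - X * Phi (Xᵀ * W)) =
        -(3 / 2) * finner ((Xᵀ * X - 1) ^ 2) (Phi (Xᵀ * W))) ∧
    (∀ X : Matrix (Fin n) (Fin p) ℝ,
      finner (X * (Xᵀ * X - 1)) (gradg X) =
        -(3 / 2) * finner ((Xᵀ * X - 1) ^ 2) (Phi (Xᵀ * gradf (X * Amap X)))) := by
  refine ⟨finner_mul_sub_one_derivMulAmap, fun X => ?_⟩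
  rw [(hgradg X).unique (hasGradAt_g (hgradf _))]
  exact finner_mul_sub_one_derivMulAmap X _

end ExPen
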